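/- The formal power series F(x) = ∑_{n≥0} C(2n,n)^3 x^n satisfies, as an identity of formal power series in z, (1+8z)^{-1} · F(z·((1−z)/(1+8z))^3) = F(z^3·(1−z)/(1+8z)). -/

import Mathlib

open PowerSeries

/-- Formal composition `f ∘ g` of power series, valid when `g` has zero constant term:
the `n`-th coefficient is `∑_{k=0}^{n} f_k · [z^n] g^k`. -/
noncomputable def psComp (f g : PowerSeries ℚ) : PowerSeries ℚ :=
  PowerSeries.mk fun n =>
    ∑ k ∈ Finset.range (n + 1), (PowerSeries.coeff (R := ℚ) k f) * PowerSeries.coeff (R := ℚ) n (g ^ k)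

noncomputable def f4hat : PowerSeries ℚ :=
  PowerSeries.mk fun n => ((2 * n).choose n : ℚ) ^ 3

/-!
The series `F = f4hat` is annihilated by the Euler-type operator `θ³ - 8X(2θ+1)³`, `θ = X d/dX`,
since `(n+1)³ C(2n+2,n+1)³ = 8(2n+1)³ C(2n,n)³`. Pulling this equation back along
`u = X((1-X)/(1+8X))³` and along `v = X³(1-X)/(1+8X)` by the chain rule, one finds a single
third-order operator that kills both `(1+8X)⁻¹ F(u)` and `F(v)`. Its leading part at `0` is
`d/dX ∘ θ²`, which sends `X^(n+1)` to `(n+1)³ X^n`, so a solution is determined by its constant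
term; both sides have constant term `1`.
-/

namespace PowerSeries

theorem coeff_ofNat_mul {R : Type*} [Semiring R] (a : ℕ) [a.AtLeastTwo] (f : R⟦X⟧) (n : ℕ) :
    coeff n ((no_index (OfNat.ofNat a) : R⟦X⟧) * f) = OfNat.ofNat a * coeff n f := by
  rw [← map_ofNat C, coeff_C_mul]

theorem derivative_ofNat {R : Type*} [CommSemiring R] (n : ℕ) [n.AtLeastTwo] :
    d⁄dX R (no_index (OfNat.ofNat n) : R⟦X⟧) = 0 := by
  rw [← Nat.cast_ofNat, Derivation.map_natCast]

theorem coeff_X_mul_derivative {R : Type*} [CommSemiring R] (f : R⟦X⟧) (n : ℕ) :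
    coeff n (X * d⁄dX R f) = n * coeff n f := by
  cases n with
  | zero => simp
  | succ n => rw [coeff_succ_X_mul, coeff_derivative, mul_comm]; push_cast; rfl

theorem coeff_X_pow_mul_mul_iterate_derivative_eq_zero {R : Type*} [CommSemiring R]
    {y : R⟦X⟧} {m : ℕ} (hy : ∀ i ≤ m, coeff i y = 0) (k : ℕ) (a : R⟦X⟧) :
    coeff m (X ^ k * a * (d⁄dX R)^[k] y) = 0 := by
  rw [mul_comm (X ^ k), mul_assoc, coeff_mul]
  refine Finset.sum_eq_zero fun ⟨i, j⟩ hij => ?_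
  have hj : j ≤ m := Finset.HasAntidiagonal.antidiagonal.snd_le hij
  rw [coeff_X_pow_mul', coeff_iterate_derivative]
  split_ifs with hk
  · rw [Nat.sub_add_cancel hk, hy j hj, mul_zero, mul_zero]
  · rw [mul_zero]

theorem eq_zero_of_ode {R : Type*} [CommRing R] [IsDomain R] [CharZero R] {y a b c d : R⟦X⟧}
    (hy : constantCoeff y = 0)
    (h : d⁄dX R (X * d⁄dX R (X * d⁄dX R y)) + X ^ 3 * a * d⁄dX R (d⁄dX R (d⁄dX R y))
      + X ^ 2 * b * d⁄dX R (d⁄dX R y) + X * c * d⁄dX R y + d * y = 0) : y = 0 := by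
  ext n
  induction n using Nat.strong_induction_on with
  | _ n ih =>
  cases n with
  | zero => simpa using hy
  | succ m =>
    have hle : ∀ i ≤ m, coeff i y = 0 := fun i hi => ih i (by omega)
    have h3 := coeff_X_pow_mul_mul_iterate_derivative_eq_zero hle 3 a
    have h2 := coeff_X_pow_mul_mul_iterate_derivative_eq_zero hle 2 b
    have h1 := coeff_X_pow_mul_mul_iterate_derivative_eq_zero hle 1 c
    have h0 := coeff_X_pow_mul_mul_iterate_derivative_eq_zero hle 0 d
    simp only [Function.iterate_succ_apply', Function.iterate_zero_apply, pow_one, pow_zero,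
      one_mul] at h3 h2 h1 h0
    have hm := congrArg (coeff m) h
    simp only [map_add, h3, h2, h1, h0, add_zero, coeff_derivative, coeff_X_mul_derivative,
      map_zero] at hm
    push_cast at hm
    have hcube : ((m : R) + 1) ^ 3 * coeff (m + 1) y = 0 := by linear_combination hm
    exact (mul_eq_zero.mp hcube).resolve_left (pow_ne_zero 3 (Nat.cast_add_one_ne_zero m))

end PowerSeries

theorem psComp_eq_subst (f : ℚ⟦X⟧) {g : ℚ⟦X⟧} (hg : constantCoeff g = 0) :
    psComp f g = f.subst g := by
  ext n
  rw [psComp, coeff_mk, coeff_subst' (HasSubst.of_constantCoeff_zero' hg),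
    finsum_eq_sum_of_support_subset _ (s := Finset.range (n + 1))]
  · simp only [smul_eq_mul]
  · intro k hk
    by_contra hkn
    have hlt : n < k := by simpa using hkn
    apply hk
    obtain ⟨h, rfl⟩ := X_dvd_iff.mpr hg
    simp [mul_pow, coeff_X_pow_mul', hlt.not_ge]

theorem constantCoeff_psComp (f g : ℚ⟦X⟧) : constantCoeff (psComp f g) = constantCoeff f := by
  rw [← coeff_zero_eq_constantCoeff_apply, ← coeff_zero_eq_constantCoeff_apply, psComp, coeff_mk]
  simp

section

local notation "D" => d⁄dX ℚ

theorem succ_pow_three_mul_coeff_f4hat (n : ℕ) :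
    ((n : ℚ) + 1) ^ 3 * coeff (n + 1) f4hat = 8 * (2 * n + 1) ^ 3 * coeff n f4hat := by
  have h := congrArg (fun t : ℕ => (t : ℚ) ^ 3) (Nat.succ_mul_centralBinom_succ n)
  simp only [Nat.centralBinom, Nat.cast_mul] at h
  push_cast at h
  simp only [f4hat, coeff_mk, Nat.mul_succ]
  linear_combination h

theorem f4hat_euler_ode :
    X * D (X * D (X * D f4hat)) = 8 * X * (8 * (X * D (X * D (X * D f4hat)))
      + 12 * (X * D (X * D f4hat)) + 6 * (X * D f4hat) + f4hat) := by
  ext n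
  cases n with
  | zero => simp
  | succ n =>
    rw [coeff_X_mul_derivative, coeff_X_mul_derivative, coeff_X_mul_derivative]
    simp only [mul_assoc, coeff_ofNat_mul, coeff_succ_X_mul, map_add, coeff_X_mul_derivative]
    push_cast
    linear_combination succ_pow_three_mul_coeff_f4hat n

theorem f4hat_ode :
    X ^ 2 * (1 - 64 * X) * D (D (D f4hat)) + 3 * X * (1 - 96 * X) * D (D f4hat)
      + (1 - 208 * X) * D f4hat - 8 * f4hat = 0 := by
  refine (mul_eq_zero.mp ?_).resolve_left (X_ne_zero (R := ℚ))
  have h := f4hat_euler_ode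
  simp only [map_add, Derivation.leibniz, derivative_X, smul_eq_mul, mul_one] at h
  linear_combination h

theorem f4hat_ode_subst {g : ℚ⟦X⟧} (hg : constantCoeff g = 0) :
    g ^ 2 * (1 - 64 * g) * (D (D (D f4hat))).subst g + 3 * g * (1 - 96 * g) * (D (D f4hat)).subst g
      + (1 - 208 * g) * (D f4hat).subst g - 8 * f4hat.subst g = 0 := by
  have h := congrArg (substAlgHom (HasSubst.of_constantCoeff_zero' hg)) f4hat_ode
  simpa only [map_add, map_sub, map_mul, map_pow, map_ofNat, map_one, map_zero, substAlgHom_X,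
    coe_substAlgHom] using h

/-- The pullback of `f4hat_ode` along `X ↦ X ((1 - X) / (1 + 8X))³`, conjugated by multiplication
with `(1 + 8X)⁻¹`; it is also the pullback along `X ↦ X³ (1 - X) / (1 + 8X)`. -/
noncomputable def annihilatingOp (y : ℚ⟦X⟧) : ℚ⟦X⟧ :=
  X ^ 2 * (1 - X) ^ 2 * (1 + 8 * X) ^ 3 * D (D (D y))
    + 3 * X * (1 - X) * (1 + 8 * X) ^ 2 * (1 + 10 * X - 20 * X ^ 2) * D (D y)
    + (1 + 8 * X) * (1 + 26 * X + 54 * X ^ 2 - 784 * X ^ 3 + 784 * X ^ 4) * D y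
    - 216 * X ^ 2 * (1 + 4 * X - 8 * X ^ 2) * y

theorem annihilatingOp_sub (y z : ℚ⟦X⟧) :
    annihilatingOp (y - z) = annihilatingOp y - annihilatingOp z := by
  simp only [annihilatingOp, map_sub]
  ring

theorem eq_zero_of_annihilatingOp_eq_zero {y : ℚ⟦X⟧} (hy : constantCoeff y = 0)
    (h : annihilatingOp y = 0) : y = 0 := by
  refine eq_zero_of_ode (a := 22 + 145 * X + 152 * X ^ 2 - 832 * X ^ 3 + 512 * X ^ 4)
    (b := 75 + 534 * X + 348 * X ^ 2 - 4800 * X ^ 3 + 3840 * X ^ 4)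
    (c := 34 + 262 * X - 352 * X ^ 2 - 5488 * X ^ 3 + 6272 * X ^ 4)
    (d := -216 * X ^ 2 * (1 + 4 * X - 8 * X ^ 2)) hy ?_
  rw [← h, annihilatingOp]
  simp only [Derivation.leibniz, map_add, derivative_X, Derivation.map_one_eq_zero, smul_eq_mul]
  ring

theorem derivative_inv_one_add_eight_X :
    D (1 + 8 * X)⁻¹ = -8 * (1 + 8 * X)⁻¹ ^ 2 := by
  rw [derivative_inv']
  simp only [map_add, Derivation.map_one_eq_zero, Derivation.leibniz, derivative_X,
    derivative_ofNat, smul_eq_mul]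
  ring

instance : CharZero (FractionRing ℚ⟦X⟧) :=
  charZero_of_injective_algebraMap (algebraMap ℚ _).injective

/-- Identities in `ℚ[X, (1 + 8X)⁻¹] ⊆ ℚ⟦X⟧` are checked in the fraction field, where they become
identities of rational functions in `t = 1 + 8X`. -/
theorem exists_algebraMap_X_eq_and_algebraMap_inv_eq :
    ∃ t : FractionRing ℚ⟦X⟧, t ≠ 0 ∧ algebraMap ℚ⟦X⟧ _ X = (t - 1) / 8 ∧
      algebraMap ℚ⟦X⟧ _ (1 + 8 * X)⁻¹ = t⁻¹ := by
  have h₀ : (1 + 8 * X : ℚ⟦X⟧) * (1 + 8 * X)⁻¹ = 1 := PowerSeries.mul_inv_cancel _ (by simp)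
  have h : (1 + 8 * algebraMap ℚ⟦X⟧ (FractionRing ℚ⟦X⟧) X) * algebraMap ℚ⟦X⟧ _ (1 + 8 * X)⁻¹
      = 1 := by
    simpa only [map_add, map_mul, map_ofNat, map_one] using
      congrArg (algebraMap ℚ⟦X⟧ (FractionRing ℚ⟦X⟧)) h₀
  exact ⟨_, left_ne_zero_of_mul_eq_one h, by ring, eq_inv_of_mul_eq_one_right h⟩

theorem annihilatingOp_lhs :
    annihilatingOp ((1 + 8 * X)⁻¹ * f4hat.subst (X * ((1 - X) * (1 + 8 * X)⁻¹) ^ 3)) = 0 := by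
  have hu : constantCoeff (X * ((1 - X) * (1 + 8 * X : ℚ⟦X⟧)⁻¹) ^ 3) = 0 := by simp
  have hR := f4hat_ode_subst hu
  simp only [annihilatingOp, Derivation.leibniz, Derivation.leibniz_pow, map_add, map_sub,
    map_neg, derivative_subst (HasSubst.of_constantCoeff_zero' hu), derivative_X, derivative_ofNat,
    Derivation.map_one_eq_zero, derivative_inv_one_add_eight_X, smul_eq_mul, nsmul_eq_mul,
    Nat.cast_ofNat, Nat.reduceSub, Nat.cast_one, map_zero]
  apply IsFractionRing.injective ℚ⟦X⟧ (FractionRing ℚ⟦X⟧)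
  replace hR := congrArg (algebraMap ℚ⟦X⟧ (FractionRing ℚ⟦X⟧)) hR
  obtain ⟨t, ht, hX, hinv⟩ := exists_algebraMap_X_eq_and_algebraMap_inv_eq
  simp only [map_add, map_sub, map_mul, map_pow, map_neg, map_ofNat, map_one, map_zero, hX, hinv]
    at hR ⊢
  linear_combination (norm := skip)
    (t⁻¹ * (1 - (t - 1) / 8) ^ 2 * (1 - 20 * ((t - 1) / 8) - 8 * ((t - 1) / 8) ^ 2)) * hR
  field_simp
  ring

theorem annihilatingOp_rhs :
    annihilatingOp (f4hat.subst (X ^ 3 * (1 - X) * (1 + 8 * X)⁻¹)) = 0 := by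
  have hv : constantCoeff (X ^ 3 * (1 - X) * (1 + 8 * X : ℚ⟦X⟧)⁻¹) = 0 := by simp
  have hR := f4hat_ode_subst hv
  simp only [annihilatingOp, Derivation.leibniz, Derivation.leibniz_pow, map_add, map_sub,
    map_neg, derivative_subst (HasSubst.of_constantCoeff_zero' hv), derivative_X, derivative_ofNat,
    Derivation.map_one_eq_zero, derivative_inv_one_add_eight_X, smul_eq_mul, nsmul_eq_mul,
    Nat.cast_ofNat, Nat.reduceSub, Nat.cast_one, map_zero]
  apply IsFractionRing.injective ℚ⟦X⟧ (FractionRing ℚ⟦X⟧)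
  replace hR := congrArg (algebraMap ℚ⟦X⟧ (FractionRing ℚ⟦X⟧)) hR
  obtain ⟨t, ht, hX, hinv⟩ := exists_algebraMap_X_eq_and_algebraMap_inv_eq
  simp only [map_add, map_sub, map_mul, map_pow, map_neg, map_ofNat, map_one, map_zero, hX, hinv]
    at hR ⊢
  linear_combination (norm := skip)
    (27 * ((t - 1) / 8) ^ 2 * (1 + 4 * ((t - 1) / 8) - 8 * ((t - 1) / 8) ^ 2)) * hR
  field_simp
  ring

end

theorem functional_equation_f4hat :
    (1 + 8 * X : PowerSeries ℚ)⁻¹ * psComp f4hat (X * ((1 - X) * (1 + 8 * X)⁻¹) ^ 3)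
      = psComp f4hat (X ^ 3 * (1 - X) * (1 + 8 * X)⁻¹) := by
  have hu : constantCoeff (X * ((1 - X) * (1 + 8 * X : ℚ⟦X⟧)⁻¹) ^ 3) = 0 := by simp
  have hv : constantCoeff (X ^ 3 * (1 - X) * (1 + 8 * X : ℚ⟦X⟧)⁻¹) = 0 := by simp
  refine sub_eq_zero.mp (eq_zero_of_annihilatingOp_eq_zero ?_ ?_)
  · simp [constantCoeff_psComp, f4hat]
  · rw [psComp_eq_subst _ hu, psComp_eq_subst _ hv, annihilatingOp_sub, annihilatingOp_lhs,
      annihilatingOp_rhs, sub_zero]
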